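/- arXiv:2605.12932 — 4 statements merged into one kernel-verified Lean document; each statement's English description precedes it below -/
import Mathlib

section
/- Let f(X) = Σ_{i=1}^M tr((X J_i)^H A_i (X J_i)) and ℋ(X) = Σ_{i=1}^M 2·A_i·X·J_i·J_i^T as in the context. For any X, X̂ ∈ ℂ^{n×k} and any η ∈ ℝ, if Re tr(X̂^H ℋ(X)) ≥ Re tr(X^H ℋ(X)) + η, then f(X̂) ≥ f(X) + η. (The objective of the sum-of-coupled-traces problem satisfies the NPDo Ansatz.) -/
open Matrix
open scoped ComplexOrder

/-!
For positive semidefinite `A`, expanding `0 ≤ Re tr((Y - Z)ᴴ A (Y - Z))` gives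
`2 Re tr(Yᴴ A Z) ≤ Re tr(Yᴴ A Y) + Re tr(Zᴴ A Z)`. Because the selection matrices `J i` are real,
`Re tr(Yᴴ ℋ(X)) = 2 Σᵢ Re tr((Y J i)ᴴ A i (X J i))`; in particular `Re tr(Xᴴ ℋ(X)) = 2 f(X)`, and
summing the inequality with `Y = X̂ J i`, `Z = X J i` bounds `Re tr(X̂ᴴ ℋ(X))` by `f(X̂) + f(X)`.
-/

namespace Matrix

variable {m n p : Type*}

theorem conjTranspose_of_ite_one_zero {R : Type*} [NonAssocSemiring R] [StarRing R]
    [DecidableEq m] (c : p → m) :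
    (of fun a b => if a = c b then (1 : R) else 0)ᴴ =
      (of fun a b => if a = c b then (1 : R) else 0)ᵀ := by
  ext a b
  simp [apply_ite star]

variable [Fintype m] [Fintype n]

theorem trace_conjTranspose_mul_sum_smul {R : Type*} [CommRing R] [StarRing R]
    {ι : Type*} [Fintype ι] {q : ι → Type*} [∀ i, Fintype (q i)] (r : R)
    (Y X : Matrix m n R) (A : ι → Matrix m m R) (J : ∀ i, Matrix n (q i) R) :
    trace (Yᴴ * ∑ i, r • (A i * X * J i * (J i)ᴴ))
      = r * ∑ i, trace ((Y * J i)ᴴ * A i * (X * J i)) := by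
  simp only [Matrix.mul_sum, Matrix.mul_smul, trace_sum, trace_smul, smul_eq_mul, Finset.mul_sum]
  refine Finset.sum_congr rfl fun i _ => congrArg (r * ·) ?_
  rw [conjTranspose_mul, ← Matrix.mul_assoc Yᴴ, trace_mul_comm (Yᴴ * _)]
  simp only [Matrix.mul_assoc]

theorem IsHermitian.re_trace_conjTranspose_mul_mul_comm {A : Matrix m m ℂ} (hA : A.IsHermitian)
    (Y Z : Matrix m n ℂ) : (trace (Zᴴ * A * Y)).re = (trace (Yᴴ * A * Z)).re := by
  have h : (Yᴴ * A * Z)ᴴ = Zᴴ * A * Y := by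
    simp only [conjTranspose_mul, hA.eq, conjTranspose_conjTranspose, Matrix.mul_assoc]
  rw [← h, trace_conjTranspose, Complex.star_def, Complex.conj_re]

theorem PosSemidef.two_mul_re_trace_conjTranspose_mul_mul_le {A : Matrix m m ℂ}
    (hA : A.PosSemidef) (Y Z : Matrix m n ℂ) :
    2 * (trace (Yᴴ * A * Z)).re ≤ (trace (Yᴴ * A * Y)).re + (trace (Zᴴ * A * Z)).re := by
  have hgap : 0 ≤ (trace ((Y - Z)ᴴ * A * (Y - Z))).re :=
    Complex.nonneg_iff.mp (hA.conjTranspose_mul_mul_same (Y - Z)).trace_nonneg |>.1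
  have hsymm := hA.isHermitian.re_trace_conjTranspose_mul_mul_comm Y Z
  simp only [conjTranspose_sub, Matrix.sub_mul, Matrix.mul_sub, trace_sub, Complex.sub_re]
    at hgap
  linarith

end Matrix

theorem stmt_0_general (n k M : ℕ)
    (A : Fin M → Matrix (Fin n) (Fin n) ℂ) (hA : ∀ i, (A i).PosSemidef)
    (ki : Fin M → ℕ) (c : ∀ i, Fin (ki i) → Fin k)
    (J : ∀ i, Matrix (Fin k) (Fin (ki i)) ℂ)
    (hJ : ∀ i, J i = Matrix.of fun a b => if a = c i b then 1 else 0)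
    (f : Matrix (Fin n) (Fin k) ℂ → ℝ)
    (hf : ∀ X, f X = ∑ i, (Matrix.trace ((X * J i)ᴴ * A i * (X * J i))).re)
    (H : Matrix (Fin n) (Fin k) ℂ → Matrix (Fin n) (Fin k) ℂ)
    (hH : ∀ X, H X = ∑ i, (2 : ℂ) • (A i * X * J i * (J i)ᵀ))
    (X Xhat : Matrix (Fin n) (Fin k) ℂ) (η : ℝ)
    (hineq : (Matrix.trace (Xᴴ * H X)).re + η ≤ (Matrix.trace (Xhatᴴ * H X)).re) :
    f X + η ≤ f Xhat := by
  have hJreal : ∀ i, (J i)ᵀ = (J i)ᴴ := fun i => by rw [hJ i, conjTranspose_of_ite_one_zero]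
  have hHX : ∀ Y, (trace (Yᴴ * H X)).re
      = 2 * ∑ i, (trace ((Y * J i)ᴴ * A i * (X * J i))).re := fun Y => by
    have h := congrArg Complex.re (trace_conjTranspose_mul_sum_smul 2 Y X A J)
    simp only [Complex.mul_re, Complex.re_ofNat, Complex.im_ofNat, zero_mul, sub_zero,
      Complex.re_sum, ← hJreal, ← hH] at h
    exact h
  have hcross : 2 * ∑ i, (trace ((Xhat * J i)ᴴ * A i * (X * J i))).re ≤ f Xhat + f X := by
    rw [hf, hf, Finset.mul_sum, ← Finset.sum_add_distrib]
    exact Finset.sum_le_sum fun i _ =>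
      (hA i).two_mul_re_trace_conjTranspose_mul_mul_le (Xhat * J i) (X * J i)
  have hineq' : 2 * f X + η ≤ 2 * ∑ i, (trace ((Xhat * J i)ᴴ * A i * (X * J i))).re := by
    rw [hf X, ← hHX X, ← hHX Xhat]
    -- the products in `hineq` were elaborated with a different (defeq) `HMul` instance, so no `rw`
    exact hineq
  linarith

/-- The objective of the sum-of-coupled-traces problem satisfies the NPDo Ansatz:
if `Re tr(X̂ᴴ ℋ(X)) ≥ Re tr(Xᴴ ℋ(X)) + η` then `f(X̂) ≥ f(X) + η`. -/
theorem stmt_0 (n k M : ℕ) (hk : 1 ≤ k) (hkn : k ≤ n) (hM : 1 ≤ M)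
    (A : Fin M → Matrix (Fin n) (Fin n) ℂ) (hA : ∀ i, (A i).PosSemidef)
    (ki : Fin M → ℕ) (c : ∀ i, Fin (ki i) → Fin k) (hc : ∀ i, Function.Injective (c i))
    (J : ∀ i, Matrix (Fin k) (Fin (ki i)) ℂ)
    (hJ : ∀ i, J i = Matrix.of fun a b => if a = c i b then 1 else 0)
    (f : Matrix (Fin n) (Fin k) ℂ → ℝ)
    (hf : ∀ X, f X = ∑ i, (Matrix.trace ((X * J i)ᴴ * A i * (X * J i))).re)
    (H : Matrix (Fin n) (Fin k) ℂ → Matrix (Fin n) (Fin k) ℂ)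
    (hH : ∀ X, H X = ∑ i, (2 : ℂ) • (A i * X * J i * (J i)ᵀ))
    (X Xhat : Matrix (Fin n) (Fin k) ℂ) (η : ℝ)
    (hineq : (Matrix.trace (Xᴴ * H X)).re + η ≤ (Matrix.trace (Xhatᴴ * H X)).re) :
    f X + η ≤ f Xhat :=
  stmt_0_general n k M A hA ki c J hJ f hf H hH X Xhat η hineq
end

section
/- Let n ≥ k ≥ 1, let H ∈ ℂ^{n×k}, and let X ∈ ℂ^{n×k} be orthonormal (X^H X = I_k). Then Re tr(X^H H) ≤ ‖H‖_tr, and equality holds if and only if H = X·(X^H H) and X^H H is Hermitian positive semidefinite (i.e., H = X·(X^H H) is a polar decomposition of H with orthonormal polar factor X). -/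
open Matrix
open scoped ComplexOrder

/-- The trace norm (nuclear norm) of a complex matrix: the sum of all its singular values,
computed as the sum of the square roots of the eigenvalues of `Hᴴ * H`. -/
noncomputable def traceNorm {α β : Type*} [Fintype α] [Fintype β] [DecidableEq β]
    (H : Matrix α β ℂ) : ℝ :=
  ∑ i, Real.sqrt ((Matrix.posSemidef_conjTranspose_mul_self H).1.eigenvalues i)

/-!
Diagonalize `Hᴴ H = V diag(σ²) Vᴴ` with `V` unitary. Then the columns of `X V` are orthonormal,
the columns of `H V` are orthogonal with norms `σⱼ`, and `tr (Xᴴ H) = ∑ⱼ ⟪(X V)ⱼ, (H V)ⱼ⟫`, so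
Cauchy–Schwarz column by column gives `Re tr (Xᴴ H) ≤ ∑ⱼ σⱼ = ‖H‖_tr`. Equality forces
`(H V)ⱼ = σⱼ (X V)ⱼ`, i.e. `H = X √(Hᴴ H)`, so `Xᴴ H = √(Hᴴ H) ⪰ 0`. Conversely, if `H = X M`
with `M ⪰ 0`, then `M² = Hᴴ H`, so `M = √(Hᴴ H)`, whose trace is `‖H‖_tr`.
-/

open scoped InnerProductSpace MatrixOrder

lemma eq_norm_smul_of_re_inner_eq_norm {𝕜 E : Type*} [RCLike 𝕜] [NormedAddCommGroup E]
    [InnerProductSpace 𝕜 E] {x y : E} (hx : ‖x‖ = 1) (h : RCLike.re ⟪x, y⟫_𝕜 = ‖y‖) :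
    y = (‖y‖ : 𝕜) • x := by
  have hzero : ‖y - (‖y‖ : 𝕜) • x‖ ^ 2 = 0 := by
    rw [@norm_sub_sq 𝕜, inner_smul_right, norm_smul, hx, ← inner_conj_symm, RCLike.re_ofReal_mul,
      RCLike.conj_re, h]
    simp only [RCLike.norm_ofReal, abs_norm]
    ring
  simpa [sub_eq_zero] using hzero

section Columns

variable {𝕜 m n : Type*} [RCLike 𝕜] [Fintype m]

def colVec (B : Matrix m n 𝕜) (j : n) : EuclideanSpace 𝕜 m := WithLp.toLp 2 (Bᵀ j)

lemma inner_colVec (B C : Matrix m n 𝕜) (j : n) :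
    ⟪colVec B j, colVec C j⟫_𝕜 = (Bᴴ * C) j j := by
  simp [colVec, EuclideanSpace.inner_toLp_toLp, mul_apply, dotProduct, mul_comm]

lemma norm_colVec_sq (B : Matrix m n 𝕜) (j : n) :
    ‖colVec B j‖ ^ 2 = RCLike.re ((Bᴴ * B) j j) := by
  rw [← inner_colVec, ← @norm_sq_eq_re_inner 𝕜]

lemma norm_colVec_of_conjTranspose_mul_self_eq_one [DecidableEq n] {B : Matrix m n 𝕜}
    (hB : Bᴴ * B = 1) (j : n) : ‖colVec B j‖ = 1 :=
  (pow_eq_one_iff_of_nonneg (norm_nonneg _) two_ne_zero).mp (by simpa [hB] using norm_colVec_sq B j)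

variable [Fintype n]

lemma trace_conjTranspose_mul_eq_sum_inner (B C : Matrix m n 𝕜) :
    (Bᴴ * C).trace = ∑ j, ⟪colVec B j, colVec C j⟫_𝕜 := by
  simp [trace, inner_colVec]

lemma re_trace_conjTranspose_mul_le_sum_norm_colVec {P : Matrix m n 𝕜}
    (hP : ∀ j, ‖colVec P j‖ = 1) (Q : Matrix m n 𝕜) :
    RCLike.re (Pᴴ * Q).trace ≤ ∑ j, ‖colVec Q j‖ := by
  rw [trace_conjTranspose_mul_eq_sum_inner, map_sum]
  gcongr with j
  simpa [hP j] using re_inner_le_norm (colVec P j) (colVec Q j)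

lemma eq_mul_diagonal_of_re_trace_eq_sum_norm_colVec [DecidableEq n] {P Q : Matrix m n 𝕜}
    (hP : ∀ j, ‖colVec P j‖ = 1) (h : RCLike.re (Pᴴ * Q).trace = ∑ j, ‖colVec Q j‖) :
    Q = P * diagonal (fun j ↦ (‖colVec Q j‖ : 𝕜)) := by
  have hle (j : n) (_ : j ∈ Finset.univ) :
      RCLike.re ⟪colVec P j, colVec Q j⟫_𝕜 ≤ ‖colVec Q j‖ := by
    simpa [hP j] using re_inner_le_norm (colVec P j) (colVec Q j)
  have heq := (Finset.sum_eq_sum_iff_of_le hle).mp <| by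
    rwa [← map_sum, ← trace_conjTranspose_mul_eq_sum_inner]
  ext i j
  simpa [colVec, mul_comm, RCLike.real_smul_eq_coe_mul] using
    congrArg (· i) (eq_norm_smul_of_re_inner_eq_norm (hP j) (heq j (Finset.mem_univ j)))

lemma trace_conjTranspose_mul_unitary [DecidableEq n] (B C : Matrix m n 𝕜) {U : Matrix n n 𝕜}
    (hU : U ∈ unitary (Matrix n n 𝕜)) : ((B * U)ᴴ * (C * U)).trace = (Bᴴ * C).trace := by
  rw [conjTranspose_mul, Matrix.mul_assoc, trace_mul_comm, Matrix.mul_assoc, Matrix.mul_assoc,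
    ← star_eq_conjTranspose, Unitary.mul_star_self_of_mem hU, Matrix.mul_one]

lemma conjTranspose_mul_self_mul_left {p : Type*} {X : Matrix m n 𝕜} [DecidableEq n]
    (hX : Xᴴ * X = 1) (M : Matrix n p 𝕜) : (X * M)ᴴ * (X * M) = Mᴴ * M := by
  rw [conjTranspose_mul, Matrix.mul_assoc, ← Matrix.mul_assoc Xᴴ, hX, Matrix.one_mul]

end Columns

section SingularValues

variable {𝕜 m n : Type*} [RCLike 𝕜] [Fintype m] [Fintype n] [DecidableEq n]

lemma Matrix.PosSemidef.sqrt_eq_eigenvectorUnitary_mul {A : Matrix n n 𝕜} (hA : A.PosSemidef) :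
    CFC.sqrt A = (hA.1.eigenvectorUnitary : Matrix n n 𝕜) *
      diagonal (fun i ↦ (√(hA.1.eigenvalues i) : 𝕜)) *
        star (hA.1.eigenvectorUnitary : Matrix n n 𝕜) := by
  rw [CFC.sqrt_eq_cfc, cfc_nnreal_eq_real _ A hA.nonneg, hA.1.cfc_eq]
  simp only [IsHermitian.cfc, Unitary.conjStarAlgAut_apply]
  congr 3
  funext i
  simp [Real.coe_sqrt, Real.coe_toNNReal', max_eq_left (hA.eigenvalues_nonneg i)]

namespace Matrix

noncomputable def rightSingularVectors (H : Matrix m n 𝕜) : Matrix n n 𝕜 :=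
  (posSemidef_conjTranspose_mul_self H).1.eigenvectorUnitary

noncomputable def singularValues (H : Matrix m n 𝕜) (j : n) : ℝ :=
  √((posSemidef_conjTranspose_mul_self H).1.eigenvalues j)

lemma rightSingularVectors_mem_unitary (H : Matrix m n 𝕜) :
    H.rightSingularVectors ∈ unitary (Matrix n n 𝕜) :=
  Subtype.prop _

lemma conjTranspose_mul_self_mul_rightSingularVectors (H : Matrix m n 𝕜) :
    (H * H.rightSingularVectors)ᴴ * (H * H.rightSingularVectors) =
      diagonal (RCLike.ofReal ∘ (posSemidef_conjTranspose_mul_self H).1.eigenvalues) := by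
  rw [← IsHermitian.conjStarAlgAut_star_eigenvectorUnitary, Unitary.conjStarAlgAut_star_apply,
    conjTranspose_mul, star_eq_conjTranspose, rightSingularVectors]
  simp only [Matrix.mul_assoc]

lemma norm_colVec_mul_rightSingularVectors (H : Matrix m n 𝕜) (j : n) :
    ‖colVec (H * H.rightSingularVectors) j‖ = H.singularValues j := by
  rw [← Real.sqrt_sq (norm_nonneg _), norm_colVec_sq,
    conjTranspose_mul_self_mul_rightSingularVectors]
  simp [singularValues]

lemma sqrt_conjTranspose_mul_self (H : Matrix m n 𝕜) :
    CFC.sqrt (Hᴴ * H) = H.rightSingularVectors *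
      diagonal (fun j ↦ (H.singularValues j : 𝕜)) * star H.rightSingularVectors :=
  (posSemidef_conjTranspose_mul_self H).sqrt_eq_eigenvectorUnitary_mul

end Matrix

lemma traceNorm_eq_sum_singularValues (H : Matrix m n ℂ) :
    traceNorm H = ∑ j, H.singularValues j :=
  rfl

lemma trace_sqrt_conjTranspose_mul_self (H : Matrix m n ℂ) :
    (CFC.sqrt (Hᴴ * H)).trace = traceNorm H := by
  rw [sqrt_conjTranspose_mul_self, trace_mul_cycle, Unitary.star_mul_self_of_mem
    (rightSingularVectors_mem_unitary H), Matrix.one_mul, trace_diagonal,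
    traceNorm_eq_sum_singularValues]
  push_cast
  rfl

end SingularValues

theorem stmt_2_general (n k : ℕ)
    (H : Matrix (Fin n) (Fin k) ℂ) (X : Matrix (Fin n) (Fin k) ℂ) (hX : Xᴴ * X = 1) :
    (Matrix.trace (Xᴴ * H)).re ≤ traceNorm H ∧
      ((Matrix.trace (Xᴴ * H)).re = traceNorm H ↔
        H = X * (Xᴴ * H) ∧ (Xᴴ * H).PosSemidef) := by
  set V := H.rightSingularVectors
  have hV : V ∈ unitary _ := rightSingularVectors_mem_unitary H
  have hXV : ∀ j, ‖colVec (X * V) j‖ = 1 := norm_colVec_of_conjTranspose_mul_self_eq_one <| by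
    rw [conjTranspose_mul_self_mul_left hX, ← star_eq_conjTranspose,
      Unitary.star_mul_self_of_mem hV]
  have htr : (Xᴴ * H).trace = ((X * V)ᴴ * (H * V)).trace :=
    (trace_conjTranspose_mul_unitary X H hV).symm
  have hnorm : traceNorm H = ∑ j, ‖colVec (H * V) j‖ := by
    simp only [V, norm_colVec_mul_rightSingularVectors, traceNorm_eq_sum_singularValues]
  rw [htr, hnorm]
  refine ⟨re_trace_conjTranspose_mul_le_sum_norm_colVec hXV _, fun h ↦ ?_, fun ⟨hpolar, hpsd⟩ ↦ ?_⟩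
  · have hHV := eq_mul_diagonal_of_re_trace_eq_sum_norm_colVec hXV h
    simp only [V, norm_colVec_mul_rightSingularVectors] at hHV
    have hH : H = X * CFC.sqrt (Hᴴ * H) := by
      rw [sqrt_conjTranspose_mul_self, ← Matrix.mul_assoc, ← Matrix.mul_assoc, ← hHV,
        Matrix.mul_assoc, Unitary.mul_star_self_of_mem hV, Matrix.mul_one]
    have hXH : Xᴴ * H = CFC.sqrt (Hᴴ * H) := by
      rw [hH, ← Matrix.mul_assoc, hX, Matrix.one_mul, ← hH]
    rw [hXH, ← hH]
    exact ⟨rfl, (CFC.sqrt_nonneg _).posSemidef⟩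
  · set M := Xᴴ * H
    clear_value M
    have hsqrt : CFC.sqrt (Hᴴ * H) = M := by
      refine CFC.sqrt_unique ?_ hpsd.nonneg
      rw [hpolar, conjTranspose_mul_self_mul_left hX, hpsd.1]
    rw [← htr, ← hsqrt, trace_sqrt_conjTranspose_mul_self, ← hnorm, Complex.ofReal_re]

/-- for orthonormal `X` (i.e. `Xᴴ X = I`), `Re tr(Xᴴ H) ≤ ‖H‖_tr`, with equality
iff `H = X (Xᴴ H)` and `Xᴴ H` is Hermitian positive semidefinite (a polar decomposition). -/
theorem stmt_2 (n k : ℕ) (hk : 1 ≤ k) (hkn : k ≤ n)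
    (H : Matrix (Fin n) (Fin k) ℂ) (X : Matrix (Fin n) (Fin k) ℂ) (hX : Xᴴ * X = 1) :
    (Matrix.trace (Xᴴ * H)).re ≤ traceNorm H ∧
      ((Matrix.trace (Xᴴ * H)).re = traceNorm H ↔
        H = X * (Xᴴ * H) ∧ (Xᴴ * H).PosSemidef) :=
  stmt_2_general n k H X hX
end

section
/- Let f(X) = Σ_{i=1}^M tr((X J_i)^H A_i (X J_i)) and ℋ(X) = Σ_{i=1}^M 2·A_i·X·J_i·J_i^T as in the context, with n ≥ k. Let X ∈ ℂ^{n×k} be orthonormal and let X' ∈ ℂ^{n×k} be an orthonormal polar factor of ℋ(X), i.e., X' is orthonormal and ℋ(X) = X'Λ with Λ Hermitian positive semidefinite. Then f(X') ≥ f(X) + η, where η := ‖ℋ(X)‖_tr − Re tr(X^H ℋ(X)); moreover η ≥ 0, and η = 0 if and only if ℋ(X) = X·(X^H ℋ(X)) with X^H ℋ(X) Hermitian positive semidefinite (i.e., ℋ(X) = X·(X^H ℋ(X)) is already a polar decomposition). -/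
open Matrix
open scoped ComplexOrder

/-!
The objective is `f Y = Re B(Y, Y)` for the Hermitian, positive semidefinite sesquilinear form
`B(Y, Z) = ∑ᵢ tr((Y Jᵢ)ᴴ Aᵢ (Z Jᵢ))`, and `ℋ` is its gradient: `tr(Yᴴ ℋ(X)) = 2 B(Y, X)` because
the `Jᵢ` are real. Hence `f (X' - X) ≥ 0` expands to `f X' ≥ Re tr(X'ᴴ ℋ(X)) - f X = tr Λ - f X`,
and `tr Λ = ‖ℋ(X)‖_tr` because `Λ² = ℋ(X)ᴴ ℋ(X)`; with `Re tr(Xᴴ ℋ(X)) = 2 f X` this is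
`f X' ≥ f X + η`. Finally `2η = ‖(X - X') Λ^{1/2}‖_F²`, which vanishes iff `X Λ = X' Λ = ℋ(X)`.
-/

open scoped MatrixOrder

namespace Matrix

variable {m n : Type*} [Fintype m] [Fintype n]

lemma re_trace_conjTranspose_mul_self_nonneg (D : Matrix m n ℂ) : 0 ≤ (Dᴴ * D).trace.re :=
  (Complex.nonneg_iff.mp (posSemidef_conjTranspose_mul_self D).trace_nonneg).1

lemma re_trace_conjTranspose_mul_self_eq_zero_iff {D : Matrix m n ℂ} :
    (Dᴴ * D).trace.re = 0 ↔ D = 0 := by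
  have him := (Complex.nonneg_iff.mp (posSemidef_conjTranspose_mul_self D).trace_nonneg).2
  rw [← trace_conjTranspose_mul_self_eq_zero_iff]
  exact ⟨fun h => Complex.ext h him.symm, fun h => by rw [h, Complex.zero_re]⟩

lemma IsHermitian.re_trace_conjTranspose_sub_mul_mul_sub {A : Matrix m m ℂ} (hA : A.IsHermitian)
    (Y Z : Matrix m n ℂ) :
    ((Y - Z)ᴴ * A * (Y - Z)).trace.re =
      (Yᴴ * A * Y).trace.re + (Zᴴ * A * Z).trace.re - 2 * (Yᴴ * A * Z).trace.re := by
  have hswap : (Zᴴ * A * Y).trace = star (Yᴴ * A * Z).trace := by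
    rw [← trace_conjTranspose]
    simp only [conjTranspose_mul, conjTranspose_conjTranspose, hA.eq, Matrix.mul_assoc]
  simp only [conjTranspose_sub, Matrix.sub_mul, Matrix.mul_sub, trace_sub, Complex.sub_re, hswap,
    Complex.star_def, Complex.conj_re]
  ring

lemma PosSemidef.two_mul_re_trace_le {A : Matrix m m ℂ} (hA : A.PosSemidef) (Y Z : Matrix m n ℂ) :
    2 * (Yᴴ * A * Z).trace.re ≤ (Yᴴ * A * Y).trace.re + (Zᴴ * A * Z).trace.re := by
  have h := (Complex.nonneg_iff.mp (hA.conjTranspose_mul_mul_same (Y - Z)).trace_nonneg).1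
  rw [hA.1.re_trace_conjTranspose_sub_mul_mul_sub] at h
  linarith

variable [DecidableEq n]

lemma PosSemidef.re_trace_sqrt {M : Matrix n n ℂ} (hM : M.PosSemidef) :
    (CFC.sqrt M).trace.re = ∑ i, √(hM.1.eigenvalues i) := by
  rw [CFC.sqrt_eq_cfc, cfc_nnreal_eq_real _ M, hM.1.cfc_eq, IsHermitian.cfc,
    Unitary.conjStarAlgAut_apply, trace_mul_comm, ← Matrix.mul_assoc,
    Unitary.coe_star_mul_self, one_mul, trace_diagonal, Complex.re_sum]
  refine Finset.sum_congr rfl fun i _ => ?_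
  simp [max_eq_left (hM.eigenvalues_nonneg i)]

lemma traceNorm_eq_re_trace_of_conjTranspose_mul_self_eq {H : Matrix m n ℂ} {L : Matrix n n ℂ}
    (hL : L.PosSemidef) (h : Hᴴ * H = L * L) : traceNorm H = L.trace.re := by
  have hHH := posSemidef_conjTranspose_mul_self H
  obtain rfl : L = CFC.sqrt (Hᴴ * H) :=
    ((CFC.sqrt_eq_iff _ _ hHH.nonneg hL.nonneg).mpr h.symm).symm
  rw [traceNorm, hHH.re_trace_sqrt]

variable {Y Z : Matrix m n ℂ} {Λ : Matrix n n ℂ}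

lemma traceNorm_mul_of_conjTranspose_mul_self_eq_one (hY : Yᴴ * Y = 1) (hΛ : Λ.PosSemidef) :
    traceNorm (Y * Λ) = Λ.trace.re := by
  refine traceNorm_eq_re_trace_of_conjTranspose_mul_self_eq hΛ ?_
  rw [conjTranspose_mul, Matrix.mul_assoc, ← Matrix.mul_assoc Yᴴ, hY, one_mul, hΛ.1.eq]

lemma re_trace_conjTranspose_sub_mul_sqrt (hY : Yᴴ * Y = 1) (hZ : Zᴴ * Z = 1)
    (hΛ : Λ.PosSemidef) :
    ((Y * CFC.sqrt Λ - Z * CFC.sqrt Λ)ᴴ * (Y * CFC.sqrt Λ - Z * CFC.sqrt Λ)).trace.re =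
      2 * (Λ.trace.re - (Yᴴ * (Z * Λ)).trace.re) := by
  classical
  set S := CFC.sqrt Λ
  have hS : Sᴴ = S := (CFC.sqrt_nonneg Λ).posSemidef.1.eq
  have hSS : S * S = Λ := CFC.sqrt_mul_sqrt_self Λ hΛ.nonneg
  have hgram : ∀ {W V : Matrix m n ℂ}, ((W * S)ᴴ * (V * S)).trace = (Wᴴ * (V * Λ)).trace := by
    intro W V
    rw [conjTranspose_mul, hS, Matrix.mul_assoc, trace_mul_comm, Matrix.mul_assoc,
      Matrix.mul_assoc, hSS]
  have h := isHermitian_one.re_trace_conjTranspose_sub_mul_mul_sub (Y * S) (Z * S)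
  simp only [Matrix.mul_one] at h
  rw [h, hgram, hgram, hgram, ← Matrix.mul_assoc, ← Matrix.mul_assoc, hY, hZ, one_mul]
  ring

lemma re_trace_conjTranspose_mul_mul_le (hY : Yᴴ * Y = 1) (hZ : Zᴴ * Z = 1)
    (hΛ : Λ.PosSemidef) : (Yᴴ * (Z * Λ)).trace.re ≤ Λ.trace.re := by
  have h := re_trace_conjTranspose_mul_self_nonneg (Y * CFC.sqrt Λ - Z * CFC.sqrt Λ)
  rw [re_trace_conjTranspose_sub_mul_sqrt hY hZ hΛ] at h
  linarith

lemma mul_eq_mul_of_re_trace_conjTranspose_mul_mul_eq (hY : Yᴴ * Y = 1) (hZ : Zᴴ * Z = 1)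
    (hΛ : Λ.PosSemidef) (h : (Yᴴ * (Z * Λ)).trace.re = Λ.trace.re) : Y * Λ = Z * Λ := by
  have hD := re_trace_conjTranspose_sub_mul_sqrt hY hZ hΛ
  rw [h, sub_self, mul_zero, re_trace_conjTranspose_mul_self_eq_zero_iff, sub_eq_zero] at hD
  rw [← CFC.sqrt_mul_sqrt_self Λ hΛ.nonneg, ← Matrix.mul_assoc, hD, Matrix.mul_assoc]

end Matrix

open Matrix

section CoupledTraces

variable {n k ι : Type*} [Fintype n] [Fintype k] [Fintype ι] {κ : ι → Type*}
  [∀ i, Fintype (κ i)] (A : ι → Matrix n n ℂ) (J : ∀ i, Matrix k (κ i) ℂ)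

def coupledTrace (Y Z : Matrix n k ℂ) : ℂ :=
  ∑ i, ((Y * J i)ᴴ * A i * (Z * J i)).trace

def coupledTraceGrad (X : Matrix n k ℂ) : Matrix n k ℂ :=
  ∑ i, (2 : ℂ) • (A i * X * J i * (J i)ᵀ)

lemma trace_conjTranspose_mul_coupledTraceGrad (hJ : ∀ i, (J i)ᴴ = (J i)ᵀ) (Y X : Matrix n k ℂ) :
    (Yᴴ * coupledTraceGrad A J X).trace = 2 * coupledTrace A J Y X := by
  rw [coupledTraceGrad, coupledTrace, Matrix.mul_sum, trace_sum, Finset.mul_sum]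
  refine Finset.sum_congr rfl fun i _ => ?_
  rw [Matrix.mul_smul, trace_smul, smul_eq_mul, ← hJ, conjTranspose_mul]
  simp only [Matrix.mul_assoc]
  rw [trace_mul_comm (J i)ᴴ]
  simp only [Matrix.mul_assoc]

lemma two_mul_re_coupledTrace_le (hA : ∀ i, (A i).PosSemidef) (Y Z : Matrix n k ℂ) :
    2 * (coupledTrace A J Y Z).re ≤ (coupledTrace A J Y Y).re + (coupledTrace A J Z Z).re := by
  simp only [coupledTrace, Complex.re_sum, Finset.mul_sum, ← Finset.sum_add_distrib]
  exact Finset.sum_le_sum fun i _ => (hA i).two_mul_re_trace_le (Y * J i) (Z * J i)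

end CoupledTraces

theorem stmt_3_general (n k M : ℕ)
    (A : Fin M → Matrix (Fin n) (Fin n) ℂ) (hA : ∀ i, (A i).PosSemidef)
    (ki : Fin M → ℕ) (c : ∀ i, Fin (ki i) → Fin k)
    (J : ∀ i, Matrix (Fin k) (Fin (ki i)) ℂ)
    (hJ : ∀ i, J i = Matrix.of fun a b => if a = c i b then 1 else 0)
    (f : Matrix (Fin n) (Fin k) ℂ → ℝ)
    (hf : ∀ X, f X = ∑ i, (Matrix.trace ((X * J i)ᴴ * A i * (X * J i))).re)
    (H : Matrix (Fin n) (Fin k) ℂ → Matrix (Fin n) (Fin k) ℂ)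
    (hH : ∀ X, H X = ∑ i, (2 : ℂ) • (A i * X * J i * (J i)ᵀ))
    (X X' : Matrix (Fin n) (Fin k) ℂ) (hX : Xᴴ * X = 1) (hX' : X'ᴴ * X' = 1)
    (Λ : Matrix (Fin k) (Fin k) ℂ) (hΛ : Λ.PosSemidef) (hpolar : H X = X' * Λ)
    (η : ℝ) (hη : η = traceNorm (H X) - (Matrix.trace (Xᴴ * H X)).re) :
    f X + η ≤ f X' ∧ 0 ≤ η ∧
      (η = 0 ↔ H X = X * (Xᴴ * H X) ∧ (Xᴴ * H X).PosSemidef) := by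
  have hJreal : ∀ i, (J i)ᴴ = (J i)ᵀ := fun i => by
    ext a b
    simp [hJ, apply_ite (starRingEnd ℂ)]
  have hf' : ∀ Y, f Y = (coupledTrace A J Y Y).re := fun Y => by
    rw [hf, coupledTrace, Complex.re_sum]
  have hgrad : ∀ Y, (Yᴴ * H X).trace.re = 2 * (coupledTrace A J Y X).re := fun Y => by
    rw [hH, ← coupledTraceGrad, trace_conjTranspose_mul_coupledTraceGrad A J hJreal]
    simp [Complex.mul_re]
  have hnorm : traceNorm (H X) = Λ.trace.re :=
    hpolar ▸ traceNorm_mul_of_conjTranspose_mul_self_eq_one hX' hΛ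
  have hη' : η = Λ.trace.re - (Xᴴ * (X' * Λ)).trace.re := by rw [hη, hnorm, hpolar]
  refine ⟨?_, by linarith [re_trace_conjTranspose_mul_mul_le hX hX' hΛ], ⟨fun h0 => ?_, ?_⟩⟩
  · have hX'H : (X'ᴴ * H X).trace.re = Λ.trace.re := by
      rw [hpolar, ← Matrix.mul_assoc, hX', one_mul]
    have hexpand := two_mul_re_coupledTrace_le A J hA X' X
    linarith [hη, hnorm, hgrad X', hgrad X, hf' X, hf' X']
  · have hXΛ : X * Λ = H X :=
      hpolar ▸ mul_eq_mul_of_re_trace_conjTranspose_mul_mul_eq hX hX' hΛ (by linarith)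
    have hP : Xᴴ * H X = Λ := by rw [← hXΛ, ← Matrix.mul_assoc, hX, one_mul]
    exact ⟨hP ▸ hXΛ.symm, hP ▸ hΛ⟩
  · rintro ⟨hdecomp, hpsd⟩
    have hnorm' := traceNorm_mul_of_conjTranspose_mul_self_eq_one hX hpsd
    rw [← hdecomp] at hnorm'
    rw [hη, hnorm', sub_self]

/-- one SCF step of the NPDo iteration increases the sum-of-coupled-traces
objective by at least `η = ‖ℋ(X)‖_tr − Re tr(Xᴴ ℋ(X)) ≥ 0`, and `η = 0` iff
`ℋ(X) = X (Xᴴ ℋ(X))` is already a polar decomposition. -/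
theorem stmt_3 (n k M : ℕ) (hk : 1 ≤ k) (hkn : k ≤ n) (hM : 1 ≤ M)
    (A : Fin M → Matrix (Fin n) (Fin n) ℂ) (hA : ∀ i, (A i).PosSemidef)
    (ki : Fin M → ℕ) (c : ∀ i, Fin (ki i) → Fin k) (hc : ∀ i, Function.Injective (c i))
    (J : ∀ i, Matrix (Fin k) (Fin (ki i)) ℂ)
    (hJ : ∀ i, J i = Matrix.of fun a b => if a = c i b then 1 else 0)
    (f : Matrix (Fin n) (Fin k) ℂ → ℝ)
    (hf : ∀ X, f X = ∑ i, (Matrix.trace ((X * J i)ᴴ * A i * (X * J i))).re)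
    (H : Matrix (Fin n) (Fin k) ℂ → Matrix (Fin n) (Fin k) ℂ)
    (hH : ∀ X, H X = ∑ i, (2 : ℂ) • (A i * X * J i * (J i)ᵀ))
    (X X' : Matrix (Fin n) (Fin k) ℂ) (hX : Xᴴ * X = 1) (hX' : X'ᴴ * X' = 1)
    (Λ : Matrix (Fin k) (Fin k) ℂ) (hΛ : Λ.PosSemidef) (hpolar : H X = X' * Λ)
    (η : ℝ) (hη : η = traceNorm (H X) - (Matrix.trace (Xᴴ * H X)).re) :
    f X + η ≤ f X' ∧ 0 ≤ η ∧
      (η = 0 ↔ H X = X * (Xᴴ * H X) ∧ (Xᴴ * H X).PosSemidef) :=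
  stmt_3_general n k M A hA ki c J hJ f hf H hH X X' hX hX' Λ hΛ hpolar η hη
end

section
/- Let f and the matrices H_{ℓs}(P_1,…,P_m) be as defined in the context. Then for every mode 1 ≤ ℓ ≤ m and all matrices P_i ∈ ℂ^{n_i×k_i}: (i) each H_{ℓs}(P_1,…,P_m) is Hermitian positive semidefinite, and (ii) f(P_1, …, P_m) = Σ_{s=1}^t tr(P_{ℓs}^H · H_{ℓs}(P_1,…,P_m) · P_{ℓs}). -/
open Matrix Filter Topology
open scoped ComplexOrder Classical

/-- The entries of the multi-mode product `B ×₁ P₁ᴴ ×₂ ⋯ ×ₘ Pₘᴴ` of an `m`-mode tensor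
`B` of size `n 0 × ⋯ × n (m-1)` with the conjugate transposes of the matrices `P ℓ`.
The column index set of `P ℓ` is `(s : Fin t) × Fin (κ ℓ s)`, encoding the partition of
`k ℓ = Σ s, κ ℓ s` into `t` blocks (block `s` has the indices with first component `s`). -/
noncomputable def multiProd {m t : ℕ} {n : Fin m → ℕ} {κ : Fin m → Fin t → ℕ}
    (B : (∀ ℓ, Fin (n ℓ)) → ℂ)
    (P : ∀ ℓ, Matrix (Fin (n ℓ)) ((s : Fin t) × Fin (κ ℓ s)) ℂ) :
    (∀ ℓ, (s : Fin t) × Fin (κ ℓ s)) → ℂ :=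
  fun i => ∑ j : ∀ ℓ, Fin (n ℓ), (∏ ℓ, star (P ℓ (j ℓ) (i ℓ))) * B j

/-- The block-diagonal objective
`f(P₁,…,Pₘ) = ‖BDiag(B ×₁ P₁ᴴ ×₂ ⋯ ×ₘ Pₘᴴ)‖_F²`: the sum of `|T(i)|²` over all
multi-indices `i` whose components all lie in the same diagonal block. -/
noncomputable def fObj {m t : ℕ} {n : Fin m → ℕ} {κ : Fin m → Fin t → ℕ}
    (B : (∀ ℓ, Fin (n ℓ)) → ℂ)
    (P : ∀ ℓ, Matrix (Fin (n ℓ)) ((s : Fin t) × Fin (κ ℓ s)) ℂ) : ℝ :=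
  ∑ i : ∀ ℓ, (s : Fin t) × Fin (κ ℓ s),
    if ∃ s : Fin t, ∀ ℓ, (i ℓ).1 = s then Complex.normSq (multiProd B P i) else 0

/-- The tensor `B_{ℓ,s} = B ×₁ P_{1s}ᴴ ⋯ ×_{ℓ-1} P_{ℓ-1,s}ᴴ ×_{ℓ+1} P_{ℓ+1,s}ᴴ ⋯ ×ₘ P_{ms}ᴴ`
(mode products by the `s`-th column blocks over every mode except `ℓ`), evaluated at the index
whose `ℓ`-th component is `a` and whose other components are given by `ih`. -/
noncomputable def Bls {m t : ℕ} {n : Fin m → ℕ} {κ : Fin m → Fin t → ℕ}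
    (B : (∀ ℓ, Fin (n ℓ)) → ℂ)
    (P : ∀ ℓ, Matrix (Fin (n ℓ)) ((s : Fin t) × Fin (κ ℓ s)) ℂ)
    (ℓ : Fin m) (s : Fin t) (a : Fin (n ℓ))
    (ih : ∀ r : {r : Fin m // r ≠ ℓ}, Fin (κ r.1 s)) : ℂ :=
  ∑ j : ∀ r, Fin (n r),
    if j ℓ = a then (∏ r : {r : Fin m // r ≠ ℓ}, star (P r.1 (j r.1) ⟨s, ih r⟩)) * B j else 0

/-- The matrix `H_{ℓs}(P₁,…,Pₘ) ∈ ℂ^{n_ℓ×n_ℓ}` with `(a,b)`-entry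
`Σ_î B_{ℓ,s}(î[ℓ↦a])·conj(B_{ℓ,s}(î[ℓ↦b]))`, summed over multi-indices `î` with the
`ℓ`-th coordinate ignored. -/
noncomputable def Hmat {m t : ℕ} {n : Fin m → ℕ} {κ : Fin m → Fin t → ℕ}
    (B : (∀ ℓ, Fin (n ℓ)) → ℂ)
    (P : ∀ ℓ, Matrix (Fin (n ℓ)) ((s : Fin t) × Fin (κ ℓ s)) ℂ)
    (ℓ : Fin m) (s : Fin t) : Matrix (Fin (n ℓ)) (Fin (n ℓ)) ℂ :=
  Matrix.of fun a b =>
    ∑ ih : ∀ r : {r : Fin m // r ≠ ℓ}, Fin (κ r.1 s),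
      Bls B P ℓ s a ih * star (Bls B P ℓ s b ih)

/-- The partial Euclidean gradient `ℋ_ℓ(P₁,…,Pₘ) ∈ ℂ^{n_ℓ×k_ℓ}` of `fObj` with respect to
`P ℓ` (for the real inner product `⟨X,Y⟩ = Re tr(Yᴴ X)`): its `s`-th column block is
`2 · H_{ℓs}(P₁,…,Pₘ) · P_{ℓs}`. -/
noncomputable def scrH {m t : ℕ} {n : Fin m → ℕ} {κ : Fin m → Fin t → ℕ}
    (B : (∀ ℓ, Fin (n ℓ)) → ℂ)
    (P : ∀ ℓ, Matrix (Fin (n ℓ)) ((s : Fin t) × Fin (κ ℓ s)) ℂ)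
    (ℓ : Fin m) : Matrix (Fin (n ℓ)) ((s : Fin t) × Fin (κ ℓ s)) ℂ :=
  Matrix.of fun a sc => 2 * ∑ b, Hmat B P ℓ sc.1 a b * P ℓ b sc


/-!
Let `M` be the mode-`ℓ` unfolding of `B_{ℓ,s}`, so that `H_{ℓs} = M Mᴴ`, which is positive
semidefinite. A multi-index lies in the block-diagonal part exactly when all its components lie
in one block `s`, and for such an index `(s, g)` the entry of `B ×₁ P₁ᴴ ⋯ ×ₘ Pₘᴴ` is the entry
`(g_ℓ, (g_r)_{r ≠ ℓ})` of `P_{ℓs}ᴴ M`. Hence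
`f = Σ_s ‖P_{ℓs}ᴴ M‖_F² = Σ_s Re tr(P_{ℓs}ᴴ M Mᴴ P_{ℓs})`.
-/

namespace Matrix

theorem re_trace_mul_conjTranspose_self {ι κ : Type*} [Fintype ι] [Fintype κ]
    (N : Matrix ι κ ℂ) : (N * Nᴴ).trace.re = ∑ i, ∑ j, Complex.normSq (N i j) := by
  simp only [trace, diag_apply, mul_apply, conjTranspose_apply, Complex.re_sum,
    Complex.star_def, Complex.mul_conj, Complex.ofReal_re]

theorem re_trace_conjTranspose_mul_mul_conjTranspose_mul {ι κ μ : Type*} [Fintype ι]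
    [Fintype κ] [Fintype μ] (Q : Matrix ι κ ℂ) (M : Matrix ι μ ℂ) :
    (Qᴴ * (M * Mᴴ) * Q).trace.re = ∑ c, ∑ j, Complex.normSq ((Qᴴ * M) c j) := by
  rw [← re_trace_mul_conjTranspose_self, conjTranspose_mul, conjTranspose_conjTranspose]
  simp only [Matrix.mul_assoc]

end Matrix

section BlockDiagonal

variable {ι σ : Type*} {κ : ι → σ → Type*}

theorem sigma_mk_eq_of_fst_eq {i : ι} {s : σ} (x : Σ s, κ i s) (h : x.1 = s) :
    (⟨s, h ▸ x.2⟩ : Σ s, κ i s) = x := by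
  subst h; rfl

theorem injective_pi_sigma_mk [Nonempty ι] :
    Function.Injective fun p : Σ s, ∀ i, κ i s => fun i => (⟨p.1, p.2 i⟩ : Σ s, κ i s) := by
  rintro ⟨s, g⟩ ⟨s', g'⟩ h
  obtain ⟨i₀⟩ := ‹Nonempty ι›
  obtain rfl : s = s' := congrArg Sigma.fst (congrFun h i₀)
  simp only [funext_iff, Sigma.mk.inj_iff, heq_eq_eq, true_and] at h
  rw [funext h]

theorem sum_ite_exists_forall_fst_eq [Fintype ι] [DecidableEq ι] [Nonempty ι] [Fintype σ]
    [∀ i s, Fintype (κ i s)] [DecidablePred fun x : ∀ i, Σ s, κ i s => ∃ s, ∀ i, (x i).1 = s]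
    {R : Type*} [AddCommMonoid R] (F : (∀ i, Σ s, κ i s) → R) :
    ∑ x, (if ∃ s, ∀ i, (x i).1 = s then F x else 0) =
      ∑ s, ∑ g : ∀ i, κ i s, F fun i => ⟨s, g i⟩ := by
  have hrange :
      Finset.univ.image (fun p : Σ s, ∀ i, κ i s => fun i => (⟨p.1, p.2 i⟩ : Σ s, κ i s)) =
        Finset.univ.filter fun x => ∃ s, ∀ i, (x i).1 = s := by
    ext x
    simp only [Finset.mem_image, Finset.mem_univ, true_and, Finset.mem_filter]
    constructor
    · rintro ⟨⟨s, g⟩, rfl⟩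
      exact ⟨s, fun _ => rfl⟩
    · rintro ⟨s, hs⟩
      exact ⟨⟨s, fun i => hs i ▸ (x i).2⟩, funext fun i => sigma_mk_eq_of_fst_eq _ _⟩
  rw [← Finset.sum_filter, ← hrange, Finset.sum_image fun p _ q _ h => injective_pi_sigma_mk h,
    ← Finset.univ_sigma_univ, Finset.sum_sigma]

end BlockDiagonal

section ModeUnfolding

variable {m t : ℕ} {n : Fin m → ℕ} {κ : Fin m → Fin t → ℕ}
  (B : (∀ ℓ, Fin (n ℓ)) → ℂ)
  (P : ∀ ℓ, Matrix (Fin (n ℓ)) ((s : Fin t) × Fin (κ ℓ s)) ℂ)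

noncomputable def blsUnfolding (ℓ : Fin m) (s : Fin t) :
    Matrix (Fin (n ℓ)) (∀ r : {r : Fin m // r ≠ ℓ}, Fin (κ r.1 s)) ℂ :=
  Matrix.of (Bls B P ℓ s)

theorem Hmat_eq_mul_conjTranspose (ℓ : Fin m) (s : Fin t) :
    Hmat B P ℓ s = blsUnfolding B P ℓ s * (blsUnfolding B P ℓ s)ᴴ := by
  ext a b
  simp [Hmat, blsUnfolding, Matrix.mul_apply]

theorem Hmat_posSemidef (ℓ : Fin m) (s : Fin t) : (Hmat B P ℓ s).PosSemidef := by
  rw [Hmat_eq_mul_conjTranspose]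
  exact Matrix.posSemidef_self_mul_conjTranspose _

theorem multiProd_sigma_mk (ℓ : Fin m) (s : Fin t) (g : ∀ r, Fin (κ r s)) :
    multiProd B P (fun r => ⟨s, g r⟩) =
      ((Matrix.of fun a (c : Fin (κ ℓ s)) => P ℓ a ⟨s, c⟩)ᴴ * blsUnfolding B P ℓ s)
        (g ℓ) (fun r => g r.1) := by
  simp only [multiProd, Matrix.mul_apply, Matrix.conjTranspose_apply, Matrix.of_apply,
    blsUnfolding, Bls, Finset.mul_sum, mul_ite, mul_zero]
  rw [Finset.sum_comm]
  refine Finset.sum_congr rfl fun j _ => ?_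
  rw [Finset.sum_ite_eq, if_pos (Finset.mem_univ _), Fintype.prod_eq_mul_prod_subtype_ne _ ℓ,
    mul_assoc]

end ModeUnfolding

theorem stmt_6_general (m t : ℕ)
    (n : Fin m → ℕ)
    (κ : Fin m → Fin t → ℕ)
    (B : (∀ ℓ, Fin (n ℓ)) → ℂ)
    (P : ∀ ℓ, Matrix (Fin (n ℓ)) ((s : Fin t) × Fin (κ ℓ s)) ℂ) :
    ∀ ℓ : Fin m,
      (∀ s : Fin t, (Hmat B P ℓ s).PosSemidef) ∧
      fObj B P = ∑ s : Fin t,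
        (Matrix.trace
          ((Matrix.of fun a (c : Fin (κ ℓ s)) => P ℓ a ⟨s, c⟩)ᴴ * Hmat B P ℓ s *
            (Matrix.of fun a (c : Fin (κ ℓ s)) => P ℓ a ⟨s, c⟩))).re := by
  intro ℓ
  have : Nonempty (Fin m) := ⟨ℓ⟩
  refine ⟨Hmat_posSemidef B P ℓ, ?_⟩
  rw [fObj, sum_ite_exists_forall_fst_eq (κ := fun ℓ s => Fin (κ ℓ s))]
  refine Finset.sum_congr rfl fun s _ => ?_
  rw [Hmat_eq_mul_conjTranspose, Matrix.re_trace_conjTranspose_mul_mul_conjTranspose_mul,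
    ← Fintype.sum_prod_type']
  exact Fintype.sum_equiv (Equiv.piSplitAt ℓ fun r => Fin (κ r s)) _ _ fun g => by
    rw [multiProd_sigma_mk B P ℓ]; rfl

/-- each `H_{ℓs}` is Hermitian positive semidefinite, and the block-diagonal
objective can be written as `f(P₁,…,Pₘ) = Σ_s tr(P_{ℓs}ᴴ H_{ℓs} P_{ℓs})` for every mode `ℓ`. -/
theorem stmt_6 (m t : ℕ) (hm : 1 ≤ m) (ht : 1 ≤ t)
    (n : Fin m → ℕ) (hn : ∀ ℓ, 1 ≤ n ℓ)
    (κ : Fin m → Fin t → ℕ) (hκ : ∀ ℓ s, 1 ≤ κ ℓ s)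
    (hkn : ∀ ℓ, (∑ s, κ ℓ s) ≤ n ℓ)
    (B : (∀ ℓ, Fin (n ℓ)) → ℂ)
    (P : ∀ ℓ, Matrix (Fin (n ℓ)) ((s : Fin t) × Fin (κ ℓ s)) ℂ) :
    ∀ ℓ : Fin m,
      (∀ s : Fin t, (Hmat B P ℓ s).PosSemidef) ∧
      fObj B P = ∑ s : Fin t,
        (Matrix.trace
          ((Matrix.of fun a (c : Fin (κ ℓ s)) => P ℓ a ⟨s, c⟩)ᴴ * Hmat B P ℓ s *
            (Matrix.of fun a (c : Fin (κ ℓ s)) => P ℓ a ⟨s, c⟩))).re :=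
  stmt_6_general m t n κ B P
end
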